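/- In the canonical model of MPT, the cross relation holds: for all maximal consistent sets s, s', t, if s →□ s' and s' →K t, then there exists t' with s →K t' and t' →□ t. -/

import Mathlib

inductive Fml : Type
  | atom : ℕ → Fml
  | neg : Fml → Fml
  | and : Fml → Fml → Fml
  | K : Fml → Fml
  | box : Fml → Fml

def Fml.imp (φ ψ : Fml) : Fml := (φ.and ψ.neg).neg
def Fml.or (φ ψ : Fml) : Fml := (φ.neg.and ψ.neg).neg

/-- Boolean evaluation treating atoms, `K`-formulae and `□`-formulae as opaque;
used to express "all propositional tautologies". -/
def evalB (v : Fml → Bool) : Fml → Bool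
  | .neg φ => !(evalB v φ)
  | .and φ ψ => evalB v φ && evalB v ψ
  | φ => v φ

/-- Provability in the bimodal system MPT. -/
inductive Prf : Fml → Prop
  | taut (φ : Fml) : (∀ v : Fml → Bool, evalB v φ = true) → Prf φ
  | mp {φ ψ : Fml} : Prf (φ.imp ψ) → Prf φ → Prf ψ
  | atomPerm (n : ℕ) : Prf ((((Fml.atom n).imp (Fml.atom n).box)).and
      (((Fml.atom n).neg).imp ((Fml.atom n).neg).box))
  | normBox (φ ψ : Fml) : Prf ((φ.imp ψ).box.imp (φ.box.imp ψ.box))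
  | boxT (φ : Fml) : Prf (φ.box.imp φ)
  | box4 (φ : Fml) : Prf (φ.box.imp φ.box.box)
  | normK (φ ψ : Fml) : Prf ((φ.imp ψ).K.imp (φ.K.imp ψ.K))
  | kT (φ : Fml) : Prf (φ.K.imp φ)
  | k4 (φ : Fml) : Prf (φ.K.imp φ.K.K)
  | k5 (φ : Fml) : Prf (φ.imp φ.neg.K.neg.K)
  | cross (φ : Fml) : Prf (φ.box.K.imp φ.K.box)
  | conn (φ ψ : Fml) : Prf (((φ.box.imp ψ).box).or ((ψ.box.imp φ).box))
  | ntree (φ ψ : Fml) : Prf (((φ.K.box).and ((φ.box.imp ψ.box).K)).imp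
      ((φ.box.imp ψ.box).K.box))
  | necK {φ : Fml} : Prf φ → Prf φ.K
  | necBox {φ : Fml} : Prf φ → Prf φ.box

/-- Conjunction of a finite list of formulae (empty list ↦ a tautology). -/
def conj : List Fml → Fml
  | [] => ((Fml.atom 0).and (Fml.atom 0).neg).neg
  | φ :: l => φ.and (conj l)

/-- A set of formulae is consistent if no finite conjunction from it is refutable. -/
def Consistent (s : Set Fml) : Prop :=
  ∀ l : List Fml, (∀ φ ∈ l, φ ∈ s) → ¬ Prf (conj l).neg

/-- Maximal consistent sets: the points of the canonical model. -/
def MCS (s : Set Fml) : Prop :=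
  Consistent s ∧ ∀ t : Set Fml, Consistent t → s ⊆ t → s = t

/-- Canonical `□`-accessibility: `s →□ t` iff `{φ : □φ ∈ s} ⊆ t`. -/
def RB (s t : Set Fml) : Prop := ∀ φ : Fml, φ.box ∈ s → φ ∈ t

/-- Canonical `K`-accessibility: `s →K t` iff `{φ : Kφ ∈ s} ⊆ t`. -/
def RK (s t : Set Fml) : Prop := ∀ φ : Fml, φ.K ∈ s → φ ∈ t

/-!
Let `t'` be a maximal consistent extension of `{φ | Kφ ∈ s} ∪ {¬□ψ | ψ ∉ t}`; it is a `K`-successor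
of `s` and a `□`-predecessor of `t` by construction. If that set were inconsistent, some `a` with
`Ka ∈ s` would prove the negation of `¬□ψ₁ ∧ … ∧ ¬□ψₙ` with all `ψᵢ ∉ t`, i.e. a disjunction `d` of
boxes. By S4, `d → □d`, so `K□d ∈ s`; the cross axiom gives `□Kd ∈ s`, hence `Kd ∈ s'` and `d ∈ t`,
while every `¬□ψᵢ` lies in `t` by the T axiom.
-/

@[simp, grind =] lemma evalB_neg (v : Fml → Bool) (φ : Fml) : evalB v φ.neg = !evalB v φ := rfl

@[simp, grind =] lemma evalB_and (v : Fml → Bool) (φ ψ : Fml) :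
    evalB v (φ.and ψ) = (evalB v φ && evalB v ψ) := rfl

@[simp, grind =] lemma evalB_imp (v : Fml → Bool) (φ ψ : Fml) :
    evalB v (φ.imp ψ) = (!evalB v φ || evalB v ψ) := by
  simp [Fml.imp]

@[simp, grind =] lemma evalB_conj_nil (v : Fml → Bool) : evalB v (conj []) = true := by
  simp [conj]

@[simp, grind =] lemma evalB_conj_cons (v : Fml → Bool) (φ : Fml) (l : List Fml) :
    evalB v (conj (φ :: l)) = (evalB v φ && evalB v (conj l)) := rfl

namespace Prf

variable {φ ψ χ : Fml}

lemma of_entails (h : ∀ v, evalB v φ = true → evalB v ψ = true) (hφ : Prf φ) : Prf ψ :=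
  (taut (φ.imp ψ) fun v => by grind).mp hφ

lemma and_intro (hφ : Prf φ) (hψ : Prf ψ) : Prf (φ.and ψ) :=
  ((taut (φ.imp (ψ.imp (φ.and ψ))) fun v => by grind).mp hφ).mp hψ

lemma trans (h₁ : Prf (φ.imp ψ)) (h₂ : Prf (ψ.imp χ)) : Prf (φ.imp χ) :=
  of_entails (fun v => by grind) (h₁.and_intro h₂)

lemma box_mono (h : Prf (φ.imp ψ)) : Prf (φ.box.imp ψ.box) :=
  (normBox φ ψ).mp h.necBox

lemma imp_conj : ∀ {l : List Fml}, (∀ φ ∈ l, Prf (χ.imp φ)) → Prf (χ.imp (conj l))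
  | [], _ => taut _ fun v => by grind
  | φ :: l, h => of_entails (fun v => by grind)
      ((h φ List.mem_cons_self).and_intro
        (imp_conj fun ψ hψ => h ψ (List.mem_cons_of_mem φ hψ)))

lemma conj_imp_of_mem : ∀ {l : List Fml}, φ ∈ l → Prf ((conj l).imp φ)
  | ψ :: l, h => by
    rcases List.mem_cons.1 h with rfl | h
    · exact taut _ fun v => by grind
    · exact (taut ((conj (ψ :: l)).imp (conj l)) fun v => by grind).trans
        (conj_imp_of_mem h)

lemma conj_imp_conj_of_subset {l l' : List Fml} (h : l ⊆ l') : Prf ((conj l').imp (conj l)) :=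
  imp_conj fun _ hφ => conj_imp_of_mem (h hφ)

lemma and_conj_imp_conj {l l₁ l₂ : List Fml} (h : ∀ φ ∈ l, φ ∈ l₁ ∨ φ ∈ l₂) :
    Prf (((conj l₁).and (conj l₂)).imp (conj l)) := by
  refine imp_conj fun φ hφ => ?_
  rcases h φ hφ with h₁ | h₂
  · exact (taut _ fun v => by grind).trans (conj_imp_of_mem h₁)
  · exact (taut _ fun v => by grind).trans (conj_imp_of_mem h₂)

lemma K_conj_imp : ∀ {l : List Fml} {φ : Fml},
    Prf ((conj l).imp φ) → Prf ((conj (l.map Fml.K)).imp φ.K)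
  | [], φ, h => of_entails (fun v => by grind) (of_entails (ψ := φ) (fun v => by grind) h).necK
  | χ :: l, φ, h => by
    have ih : Prf ((conj (l.map Fml.K)).imp (χ.imp φ).K) :=
      K_conj_imp (of_entails (fun v => by grind) h)
    exact of_entails (fun v => by grind) (ih.and_intro (normK χ φ))

end Prf

def BoxStable (φ : Fml) : Prop := Prf (φ.imp φ.box)

lemma boxStable_neg_neg_box (ψ : Fml) : BoxStable ψ.box.neg.neg :=
  ((Prf.taut _ fun v => by grind).trans (Prf.box4 ψ)).trans
    (Prf.box_mono (Prf.taut _ fun v => by grind))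

lemma BoxStable.neg_conj :
    ∀ {l : List Fml}, (∀ χ ∈ l, BoxStable χ.neg) → BoxStable (conj l).neg
  | [], _ => Prf.taut _ fun v => by grind
  | χ :: l, h => by
    have hχ : Prf (χ.neg.box.imp (conj (χ :: l)).neg.box) :=
      Prf.box_mono (Prf.taut _ fun v => by grind)
    have hl : Prf ((conj l).neg.box.imp (conj (χ :: l)).neg.box) :=
      Prf.box_mono (Prf.taut _ fun v => by grind)
    exact Prf.of_entails (fun v => by grind)
      (((h χ List.mem_cons_self).trans hχ).and_intro
        ((BoxStable.neg_conj fun ψ hψ => h ψ (List.mem_cons_of_mem χ hψ)).trans hl))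

lemma Consistent.mono {s t : Set Fml} (ht : Consistent t) (hst : s ⊆ t) : Consistent s :=
  fun l hl => ht l fun φ hφ => hst (hl φ hφ)

lemma exists_conj_imp_neg_of_not_consistent_insert {s : Set Fml} {φ : Fml}
    (h : ¬ Consistent (insert φ s)) :
    ∃ l : List Fml, (∀ ψ ∈ l, ψ ∈ s) ∧ Prf ((conj l).imp φ.neg) := by
  classical
  simp only [Consistent, not_forall, not_not] at h
  obtain ⟨l, hl, hrefute⟩ := h
  refine ⟨l.filter (· ≠ φ), fun ψ hψ => ?_, ?_⟩
  · simp only [List.mem_filter, decide_eq_true_eq] at hψ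
    exact (Set.mem_insert_iff.1 (hl ψ hψ.1)).resolve_left hψ.2
  · have hsplit := Prf.and_conj_imp_conj (l := l) (l₁ := [φ]) (l₂ := l.filter (· ≠ φ))
      fun ψ hψ => by by_cases hψφ : ψ = φ <;> simp [hψφ, hψ]
    exact Prf.of_entails (fun v => by grind) (hsplit.and_intro hrefute)

lemma consistent_isOfFiniteCharacter : Order.IsOfFiniteCharacter {s : Set Fml | Consistent s} :=
  fun _ => ⟨fun hs _ hts _ => hs.mono hts,
    fun h l hl => h {φ | φ ∈ l} hl l.finite_toSet l fun _ => id⟩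

lemma Consistent.exists_mcs_superset {s : Set Fml} (hs : Consistent s) :
    ∃ m, s ⊆ m ∧ MCS m := by
  obtain ⟨m, hsm, hmax⟩ := consistent_isOfFiniteCharacter.exists_maximal hs
  exact ⟨m, hsm, hmax.prop, fun t ht hmt => hmt.antisymm (hmax.2 ht hmt)⟩

namespace MCS

variable {s : Set Fml} {l : List Fml} {φ ψ : Fml}

lemma mem_of_consistent_insert (hs : MCS s) (h : Consistent (insert φ s)) : φ ∈ s :=
  (hs.2 _ h (Set.subset_insert φ s)) ▸ Set.mem_insert φ s

lemma mem_of_conj_imp (hs : MCS s) (hl : ∀ ψ ∈ l, ψ ∈ s) (h : Prf ((conj l).imp φ)) : φ ∈ s := by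
  refine hs.mem_of_consistent_insert (by_contra fun hinc => ?_)
  obtain ⟨l', hl', h'⟩ := exists_conj_imp_neg_of_not_consistent_insert hinc
  refine hs.1 (l ++ l') (fun ψ hψ => (List.mem_append.1 hψ).elim (hl ψ) (hl' ψ)) ?_
  have hleft := Prf.conj_imp_conj_of_subset (List.subset_append_left l l')
  have hright := Prf.conj_imp_conj_of_subset (List.subset_append_right l l')
  exact Prf.of_entails (fun v => by grind)
    ((hleft.trans h).and_intro (hright.trans h'))

lemma mem_of_imp (hs : MCS s) (h : Prf (φ.imp ψ)) (hφ : φ ∈ s) : ψ ∈ s :=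
  hs.mem_of_conj_imp (l := [φ]) (by simpa using hφ) (Prf.of_entails (fun v => by grind) h)

lemma conj_mem (hs : MCS s) (hl : ∀ ψ ∈ l, ψ ∈ s) : conj l ∈ s :=
  hs.mem_of_conj_imp hl (Prf.taut _ fun v => by grind)

lemma false_of_mem_of_neg_mem (hs : MCS s) (h : φ ∈ s) (hneg : φ.neg ∈ s) : False :=
  hs.1 [φ, φ.neg] (by simp [h, hneg]) (Prf.taut _ fun v => by grind)

lemma neg_mem_of_not_mem (hs : MCS s) (h : φ ∉ s) : φ.neg ∈ s := by
  obtain ⟨l, hl, himp⟩ := exists_conj_imp_neg_of_not_consistent_insert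
    fun hcons => h (hs.mem_of_consistent_insert hcons)
  exact hs.mem_of_conj_imp hl himp

lemma K_mem_of_conj_imp (hs : MCS s) (hl : ∀ ψ ∈ l, ψ.K ∈ s) (h : Prf ((conj l).imp φ)) :
    φ.K ∈ s :=
  hs.mem_of_conj_imp (List.forall_mem_map.2 hl) (Prf.K_conj_imp h)

lemma neg_box_mem_of_not_mem (hs : MCS s) (h : ψ ∉ s) : ψ.box.neg ∈ s :=
  hs.neg_mem_of_not_mem fun hbox => h (hs.mem_of_imp (Prf.boxT ψ) hbox)

end MCS

lemma consistent_K_union_of_cross {s s' t B : Set Fml} (hs : MCS s) (ht : MCS t)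
    (h₁ : RB s s') (h₂ : RK s' t) (hBt : B ⊆ t) (hB : ∀ χ ∈ B, BoxStable χ.neg) :
    Consistent ({φ | φ.K ∈ s} ∪ B) := by
  classical
  intro l hl hrefute
  set lK := l.filter (·.K ∈ s)
  set lB := l.filter (·.K ∉ s)
  have hlB : ∀ χ ∈ lB, χ ∈ B := fun χ hχ => by
    simp only [lB, List.mem_filter, decide_eq_true_eq] at hχ
    exact (hl χ hχ.1).resolve_left hχ.2
  have hunion : Prf (((conj lK).and (conj lB)).imp (conj l)) :=
    Prf.and_conj_imp_conj fun χ hχ => by by_cases hχK : χ.K ∈ s <;> simp [lK, lB, hχ, hχK]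
  have hsplit : Prf ((conj lK).imp (conj lB).neg) :=
    Prf.of_entails (fun v => by grind) (hunion.and_intro hrefute)
  have hKbox : (conj lB).neg.box.K ∈ s :=
    hs.K_mem_of_conj_imp (fun χ hχ => of_decide_eq_true (List.mem_filter.1 hχ).2)
      (hsplit.trans (BoxStable.neg_conj fun χ hχ => hB χ (hlB χ hχ)))
  have hneg : (conj lB).neg ∈ t := h₂ _ (h₁ _ (hs.mem_of_imp (Prf.cross _) hKbox))
  exact ht.false_of_mem_of_neg_mem (ht.conj_mem fun χ hχ => hBt (hlB χ hχ)) hneg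

theorem canonical_cross_general (s s' t : Set Fml) (hs : MCS s) (ht : MCS t)
    (h₁ : RB s s') (h₂ : RK s' t) :
    ∃ t' : Set Fml, MCS t' ∧ RK s t' ∧ RB t' t := by
  let B := (fun ψ : Fml => ψ.box.neg) '' tᶜ
  have hBt : B ⊆ t := by
    rintro _ ⟨ψ, hψ, rfl⟩
    exact ht.neg_box_mem_of_not_mem hψ
  have hB : ∀ χ ∈ B, BoxStable χ.neg := by
    rintro _ ⟨ψ, -, rfl⟩
    exact boxStable_neg_neg_box ψ
  obtain ⟨t', hsub, ht'⟩ :=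
    (consistent_K_union_of_cross hs ht h₁ h₂ hBt hB).exists_mcs_superset
  refine ⟨t', ht', fun φ hφ => hsub (Or.inl hφ), fun ψ hψ => ?_⟩
  by_contra hψt
  exact ht'.false_of_mem_of_neg_mem hψ (hsub (Or.inr ⟨ψ, hψt, rfl⟩))

/-- Cross property of the MPT canonical model. -/
theorem canonical_cross (s s' t : Set Fml) (hs : MCS s) (hs' : MCS s') (ht : MCS t)
    (h₁ : RB s s') (h₂ : RK s' t) :
    ∃ t' : Set Fml, MCS t' ∧ RK s t' ∧ RB t' t :=
  canonical_cross_general s s' t hs ht h₁ h₂
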